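/- Let P be a full-dimensional lattice polytope whose lattice points affinely generate ℤ^n, and let v ∈ Col(P). For every z ∈ S_P with ht_v(z) > 0, one has z + (v,0) ∈ S_P. -/

import Mathlib

open Set

noncomputable section

/-- The real point corresponding to a lattice point of `ℤⁿ`. -/
def toR {n : ℕ} (z : Fin n → ℤ) : Fin n → ℝ := fun i => (z i : ℝ)

/-- A lattice polytope, described as the convex hull of a nonempty finite set of
lattice points. -/
structure LatticePolytope (n : ℕ) where
  verts : Finset (Fin n → ℤ)
  nonem : verts.Nonempty

namespace LatticePolytope

variable {n : ℕ}

/-- The underlying set of the polytope. -/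
def carrier (P : LatticePolytope n) : Set (Fin n → ℝ) :=
  convexHull ℝ (↑(P.verts.image toR))

/-- `P` is full-dimensional. -/
def IsFullDim (P : LatticePolytope n) : Prop :=
  (interior P.carrier).Nonempty

/-- The set `L_P` of lattice points of `P`. -/
def latticePoints (P : LatticePolytope n) : Set (Fin n → ℤ) :=
  {z | toR z ∈ P.carrier}

/-- The lattice points of `P` affinely generate `ℤⁿ`. -/
def AffGen (P : LatticePolytope n) : Prop :=
  ∀ x₀ ∈ P.latticePoints,
    AddSubgroup.closure {y | ∃ x ∈ P.latticePoints, y = x - x₀} =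
      (⊤ : AddSubgroup (Fin n → ℤ))

/-- The `ℝ`-linear extension of an additive form on `ℤⁿ`. -/
def formR (φ : (Fin n → ℤ) →+ ℤ) : (Fin n → ℝ) → ℝ :=
  fun x => ∑ i, x i * (φ (Pi.single i 1) : ℝ)

/-- A facet of `P`, encoded together with its support form `⟨F,-⟩` (a surjective
additive form whose minimum `b_F` over `P` is attained exactly on the facet, the
facet being `(n-1)`-dimensional). -/
structure Facet (P : LatticePolytope n) where
  form : (Fin n → ℤ) →+ ℤ
  surj : Function.Surjective form
  b : ℤ
  min_le : ∀ x ∈ P.carrier, (b : ℝ) ≤ formR form x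
  attained : ∃ x ∈ P.carrier, formR form x = (b : ℝ)
  dim : Module.finrank ℝ (vectorSpan ℝ {x ∈ P.carrier | formR form x = (b : ℝ)}) + 1 = n

/-- The underlying set of a facet. -/
def Facet.set {P : LatticePolytope n} (F : P.Facet) : Set (Fin n → ℝ) :=
  {x ∈ P.carrier | formR F.form x = (F.b : ℝ)}

/-- `F` is a base facet for `v`, i.e. `v` is a column vector with base facet `F`. -/
def IsBaseFacet (P : LatticePolytope n) (v : Fin n → ℤ) (F : P.Facet) : Prop :=
  v ≠ 0 ∧ ∀ x : Fin n → ℤ, toR x ∈ P.carrier → toR x ∉ F.set →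
    toR (x + v) ∈ P.carrier

/-- `v` is a column vector of `P`. -/
def IsColVec (P : LatticePolytope n) (v : Fin n → ℤ) : Prop :=
  ∃ F : P.Facet, P.IsBaseFacet v F

/-- `Col(P)`, the set of column vectors of `P`. -/
def Col (P : LatticePolytope n) : Set (Fin n → ℤ) := {v | P.IsColVec v}

/-- The product `uv` of the column vectors `u` and `v` exists. -/
def ProdEx (P : LatticePolytope n) (u v : Fin n → ℤ) : Prop :=
  P.IsColVec u ∧ P.IsColVec v ∧ u + v ≠ 0 ∧
    ∀ Fu Fv : P.Facet, P.IsBaseFacet u Fu → P.IsBaseFacet v Fv →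
      ∀ x : Fin n → ℤ, toR x ∈ P.carrier → toR x ∉ Fu.set → toR (x + u) ∉ Fv.set

/-- `P` is balanced: `⟨P_u, v⟩ ≤ 1` for all column vectors `u, v`. -/
def Balanced (P : LatticePolytope n) : Prop :=
  ∀ u v : Fin n → ℤ, ∀ F : P.Facet, P.IsBaseFacet u F → P.IsColVec v → F.form v ≤ 1

/-- Weak existence of the product of a (nonempty) list of column vectors:
some bracketing makes all the recursively formed pairwise products exist. -/
inductive WeakProd (P : LatticePolytope n) : List (Fin n → ℤ) → Prop
  | single (v : Fin n → ℤ) (h : P.IsColVec v) : WeakProd P [v]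
  | mul (L₁ L₂ : List (Fin n → ℤ)) (h₁ : WeakProd P L₁) (h₂ : WeakProd P L₂)
      (h : P.ProdEx L₁.sum L₂.sum) : WeakProd P (L₁ ++ L₂)

/-- Strong existence of the product of a list of column vectors: all consecutive
products exist and all sums over intervals of length at least two are nonzero. -/
def StrongProd (P : LatticePolytope n) (L : List (Fin n → ℤ)) : Prop :=
  L ≠ [] ∧ (∀ x ∈ L, P.IsColVec x) ∧
  (∀ i : ℕ, ∀ h : i + 1 < L.length,
      P.ProdEx (L.get ⟨i, Nat.lt_of_succ_lt h⟩) (L.get ⟨i + 1, h⟩)) ∧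
  (∀ r s : ℕ, r < s → s < L.length → ((L.drop r).take (s + 1 - r)).sum ≠ 0)

/-- `[V]` : the set of strongly existing products of elements of `V`. -/
def bra (P : LatticePolytope n) (V : Set (Fin n → ℤ)) : Set (Fin n → ℤ) :=
  {w | ∃ L : List (Fin n → ℤ), (∀ x ∈ L, x ∈ V) ∧ P.StrongProd L ∧ L.sum = w}

/-- `⟨V⟩` : the set of weakly existing products of elements of `V`. -/
def ket (P : LatticePolytope n) (V : Set (Fin n → ℤ)) : Set (Fin n → ℤ) :=
  {w | ∃ L : List (Fin n → ℤ), (∀ x ∈ L, x ∈ V) ∧ P.WeakProd L ∧ L.sum = w}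

end LatticePolytope

/-- An admissible finite directed graph (on vertex set `Fin k`): no isolated
vertices, no loops, and an edge `a → b` is the unique directed path from `a` to
`b`. -/
structure GoodGraph (k : ℕ) (E : Fin k → Fin k → Prop) : Prop where
  no_isolated : ∀ a, (∃ b, E a b) ∨ (∃ b, E b a)
  no_loop : ∀ a, ¬ E a a
  unique_path : ∀ a b, E a b →
    ¬ ∃ c, Relation.TransGen E a c ∧ Relation.TransGen E c b

/-- A `Y`-graph: every vertex is the endpoint of at most one edge. -/
def IsYGraph (k : ℕ) (E : Fin k → Fin k → Prop) : Prop :=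
  ∀ a b c, E b a → E c a → b = c

namespace LatticePolytope

variable {n : ℕ}

/-- The graph `E` supports the system `V`: `E` is admissible, and equivalence
classes of paths (i.e. reachable pairs of vertices) are in bijection with `[V]`
compatibly with the partial product structures. -/
def Supports (P : LatticePolytope n) (V : Set (Fin n → ℤ)) (k : ℕ)
    (E : Fin k → Fin k → Prop) : Prop :=
  GoodGraph k E ∧
  ∃ f : {w // w ∈ P.bra V} → {p : Fin k × Fin k // Relation.TransGen E p.1 p.2},
    Function.Bijective f ∧
    ∀ u v : {w // w ∈ P.bra V},
      (P.ProdEx u.1 v.1 ↔ (f u).1.2 = (f v).1.1) ∧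
      ∀ h : u.1 + v.1 ∈ P.bra V, P.ProdEx u.1 v.1 →
        (f ⟨u.1 + v.1, h⟩).1 = ((f u).1.1, (f v).1.2)

/-- `V` is a rigid system of column vectors of `P`. -/
def IsRigid (P : LatticePolytope n) (V : Set (Fin n → ℤ)) : Prop :=
  V ⊆ P.Col ∧
  (∀ w, w ∈ P.bra V → -w ∉ P.bra V) ∧
  P.bra V = P.ket V ∧
  ∃ (k : ℕ) (E : Fin k → Fin k → Prop), P.Supports V k E

/-- `V` is a `Y`-rigid system of column vectors of `P`. -/
def IsYRigid (P : LatticePolytope n) (V : Set (Fin n → ℤ)) : Prop :=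
  V ⊆ P.Col ∧
  (∀ w, w ∈ P.bra V → -w ∉ P.bra V) ∧
  P.bra V = P.ket V ∧
  ∃ (k : ℕ) (E : Fin k → Fin k → Prop), IsYGraph k E ∧ P.Supports V k E

/-- `w` is an irreducible element of `[V]`. -/
def Irred (P : LatticePolytope n) (V : Set (Fin n → ℤ)) (w : Fin n → ℤ) : Prop :=
  w ∈ P.bra V ∧
  ¬ ∃ u v : Fin n → ℤ, u ∈ P.ket V ∧ v ∈ P.ket V ∧ P.ProdEx u v ∧ u + v = w

/-- The submonoid `S_P ⊆ ℤ^{n+1}` generated by `{(x,1) : x ∈ L_P}`. -/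
def SP (P : LatticePolytope n) : AddSubmonoid ((Fin n → ℤ) × ℤ) :=
  AddSubmonoid.closure {p | ∃ x ∈ P.latticePoints, p = (x, (1 : ℤ))}

/-- The height of `z ∈ ℤ^{n+1}` over the facet `F`. -/
def htF {P : LatticePolytope n} (F : P.Facet) (z : (Fin n → ℤ) × ℤ) : ℤ :=
  F.form z.1 - z.2 * F.b

end LatticePolytope

/-- `P` is `Col`-divisible: conditions (CD1) and (CD2) on products of column
vectors. -/
def LatticePolytope.ColDivisible {n : ℕ} (P : LatticePolytope n) : Prop :=
  (∀ a b c : Fin n → ℤ, a ≠ b → P.ProdEx a c → P.ProdEx b c →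
      ∃ d, (P.ProdEx d b ∧ d + b = a) ∨ (P.ProdEx d a ∧ d + a = b)) ∧
  (∀ a b c d : Fin n → ℤ, P.ProdEx a b → P.ProdEx c d → a + b = c + d → a ≠ c →
      ∃ t, (P.ProdEx c t ∧ c + t = a ∧ P.ProdEx t b ∧ t + b = d) ∨
           (P.ProdEx a t ∧ a + t = c ∧ P.ProdEx t d ∧ t + d = b))

/-- A facet is a base facet if it is the base facet of some column vector. -/
def LatticePolytope.IsBase {n : ℕ} (P : LatticePolytope n) (F : P.Facet) : Prop :=
  ∃ z, P.IsBaseFacet z F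

/-- A column vector is terminal if it has positive height over no base facet. -/
def LatticePolytope.TerminalVec {n : ℕ} (P : LatticePolytope n) (v : Fin n → ℤ) : Prop :=
  P.IsColVec v ∧ ¬ ∃ F : P.Facet, P.IsBase F ∧ 0 < F.form v

/-- The unit `N`-simplex `conv(0, e_1, …, e_N) ⊆ ℝ^N` as a lattice polytope. -/
def unitSimplex (N : ℕ) : LatticePolytope N where
  verts := insert 0 (Finset.univ.image fun i : Fin N => Pi.single i (1 : ℤ))
  nonem := ⟨0, Finset.mem_insert_self _ _⟩

/-- Doubling of `P` along the facet with support form `φ` (with `b = 0`), where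
`u` is a fixed lattice vector with `φ u = 1`: the convex hull of `P × {0}` and
`ρ(P)`, `ρ(x) = (x - φ(x)·u, φ(x))`. -/
def LatticePolytope.dbl {n : ℕ} (P : LatticePolytope n) (φ : (Fin n → ℤ) →+ ℤ)
    (u : Fin n → ℤ) : LatticePolytope (n + 1) where
  verts := (P.verts.image fun x => Fin.snoc x (0 : ℤ)) ∪
           (P.verts.image fun x => Fin.snoc (x - φ x • u) (φ x))
  nonem := (P.nonem.image _).mono Finset.subset_union_left

/-- The polytopal algebra `R[P] = R[S_P]`, realized as the subalgebra of
`R[ℤ^{n+1}]` generated by the monomials `(x,1)`, `x ∈ L_P`. -/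
def polyAlg (R : Type) [CommRing R] {n : ℕ} (P : LatticePolytope n) :
    Subalgebra R (AddMonoidAlgebra R ((Fin n → ℤ) × ℤ)) :=
  Algebra.adjoin R
    {a | ∃ x ∈ P.latticePoints, a = AddMonoidAlgebra.single (x, (1 : ℤ)) (1 : R)}

/-- The multiplicative map `z ↦ z·(1 + λv)^{ht_v z}` on `ℤ^{n+1}`. -/
def phiMap (R : Type) [CommRing R] {n : ℕ} {P : LatticePolytope n}
    (v : Fin n → ℤ) (F : P.Facet) (lam : R) (z : (Fin n → ℤ) × ℤ) :
    AddMonoidAlgebra R ((Fin n → ℤ) × ℤ) :=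
  AddMonoidAlgebra.single z 1 *
    (1 + AddMonoidAlgebra.single ((v, (0 : ℤ))) lam) ^ (LatticePolytope.htF F z).toNat

/-- An element of `R[ℤ^{n+1}]` is homogeneous of degree `d`. -/
def Homog (R : Type) [CommRing R] {n : ℕ}
    (a : AddMonoidAlgebra R ((Fin n → ℤ) × ℤ)) (d : ℕ) : Prop :=
  ∀ s ∈ a.coeff.support, s.2 = (d : ℤ)

/-- `e` is the elementary automorphism `e_v^λ` of `R[P]`: on monomials from `S_P`
it is given by `z ↦ z·(1 + λv)^{ht_v z}`. -/
def ElemAutProp (R : Type) [CommRing R] {n : ℕ} {P : LatticePolytope n}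
    (v : Fin n → ℤ) (F : P.Facet) (lam : R)
    (e : polyAlg R P →ₐ[R] polyAlg R P) : Prop :=
  ∀ z ∈ P.SP, ∀ hz : AddMonoidAlgebra.single z (1 : R) ∈ polyAlg R P,
    ((e ⟨AddMonoidAlgebra.single z 1, hz⟩ : polyAlg R P) :
        AddMonoidAlgebra R ((Fin n → ℤ) × ℤ)) = phiMap R v F lam z

/-- `e` is a graded endomorphism of `R[P]`. -/
def IsGradedEndo (R : Type) [CommRing R] {n : ℕ} {P : LatticePolytope n}
    (e : polyAlg R P →ₐ[R] polyAlg R P) : Prop :=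
  ∀ (a : polyAlg R P) (d : ℕ), Homog R (a : AddMonoidAlgebra R ((Fin n → ℤ) × ℤ)) d →
    Homog R ((e a : polyAlg R P) : AddMonoidAlgebra R ((Fin n → ℤ) × ℤ)) d

lemma formR_toR {n : ℕ} (φ : (Fin n → ℤ) →+ ℤ) (x : Fin n → ℤ) :
    LatticePolytope.formR φ (toR x) = (φ x : ℝ) := by
  have hx : φ x = ∑ i, x i * φ (Pi.single i 1) := by
    conv_lhs => rw [← Finset.univ_sum_single x]
    rw [map_sum]
    refine Finset.sum_congr rfl fun i _ => ?_
    have : Pi.single i (x i) = (x i • Pi.single i (1 : ℤ) : Fin n → ℤ) := by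
      ext j
      by_cases hj : j = i <;> simp [hj, Pi.single_apply]
    rw [this, map_zsmul, smul_eq_mul]
  rw [LatticePolytope.formR, hx]
  push_cast
  rfl

/-- If `z ∈ S_P` has positive height over the base facet of `v`, then
`z + (v,0) ∈ S_P`. -/
theorem statement4 {n : ℕ} (P : LatticePolytope n) (hfd : P.IsFullDim)
    (hgen : P.AffGen) (v : Fin n → ℤ) (F : P.Facet) (hv : P.IsBaseFacet v F)
    (z : (Fin n → ℤ) × ℤ) (hz : z ∈ P.SP) (h : 0 < LatticePolytope.htF F z) :
    z + (v, 0) ∈ P.SP := by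
  have key : ∀ z ∈ P.SP, 0 ≤ LatticePolytope.htF F z ∧
      (0 < LatticePolytope.htF F z → z + (v, 0) ∈ P.SP) := by
    intro z hz
    induction hz using AddSubmonoid.closure_induction with
    | mem p hp =>
      obtain ⟨x, hx, rfl⟩ := hp
      have hcar : toR x ∈ P.carrier := hx
      have hform : (F.b : ℝ) ≤ (F.form x : ℝ) := by
        have := F.min_le _ hcar
        rwa [formR_toR] at this
      have hle : F.b ≤ F.form x := by exact_mod_cast hform
      constructor
      · simp [LatticePolytope.htF]; omega
      · intro hpos
        have hlt : F.b < F.form x := by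
          simp only [LatticePolytope.htF] at hpos; omega
        have hnotF : toR x ∉ F.set := by
          intro hmem
          rw [LatticePolytope.Facet.set, Set.mem_setOf_eq, formR_toR] at hmem
          exact absurd (by exact_mod_cast hmem.2 : F.form x = F.b) (by omega)
        have hxv : toR (x + v) ∈ P.carrier := hv.2 x hcar hnotF
        have : ((x, (1:ℤ)) + (v, 0) : (Fin n → ℤ) × ℤ) = (x + v, 1) := by
          simp
        rw [this]
        exact AddSubmonoid.subset_closure ⟨x + v, hxv, rfl⟩
    | zero => simp [LatticePolytope.htF]
    | add a b ha hb iha ihb =>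
      have hadd : LatticePolytope.htF F (a + b) =
          LatticePolytope.htF F a + LatticePolytope.htF F b := by
        simp [LatticePolytope.htF, map_add]; ring
      constructor
      · rw [hadd]; exact add_nonneg iha.1 ihb.1
      · intro hpos
        rw [hadd] at hpos
        rcases lt_or_ge 0 (LatticePolytope.htF F a) with h1 | h1
        · have := iha.2 h1
          have : a + (v, 0) + b ∈ P.SP := AddSubmonoid.add_mem _ this hb
          convert this using 1; abel
        · have h2 : 0 < LatticePolytope.htF F b := by
            have := iha.1; omega
          have := ihb.2 h2
          have : a + (b + (v, 0)) ∈ P.SP := AddSubmonoid.add_mem _ ha this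
          convert this using 1; abel
  exact (key z hz).2 h
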